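/- Let P be an additive induced-hereditary graph property that is not the class of all graphs, and let 𝒢 be a generating set for P. Then 𝒢↓ := {G ∈ 𝒢 : G is P-strict and dec_P(G) = dec(P)} is also a generating set for P. -/

import Mathlib

/-!  Common framework: finite simple graphs on finite subsets of `ℕ`,
graph properties, `(P₁,…,Pₙ)`-partitions, products of properties,
`P`-decompositions, strict graphs, decomposability numbers, generating
sets, *-joins of copies, and the respecting notions from the paper. -/

/-- A finite simple graph on a finite vertex set of natural numbers. -/
structure NatGraph where
  verts : Finset ℕ
  Adj : ℕ → ℕ → Prop
  symm : ∀ a b, Adj a b → Adj b a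
  loopless : ∀ a, ¬Adj a a
  mem_of_adj : ∀ a b, Adj a b → a ∈ verts ∧ b ∈ verts

/-- The null graph `K₀` (no vertices). -/
def nullGraph : NatGraph where
  verts := ∅
  Adj _ _ := False
  symm _ _ h := h.elim
  loopless _ h := h
  mem_of_adj _ _ h := h.elim

namespace NatGraph

/-- The subgraph of `G` induced by the vertex set `U`. -/
def induce (G : NatGraph) (U : Finset ℕ) : NatGraph where
  verts := G.verts ∩ U
  Adj a b := G.Adj a b ∧ a ∈ U ∧ b ∈ U
  symm a b h := ⟨G.symm a b h.1, h.2.2, h.2.1⟩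
  loopless a h := G.loopless a h.1
  mem_of_adj a b h := ⟨Finset.mem_inter.2 ⟨(G.mem_of_adj a b h.1).1, h.2.1⟩,
    Finset.mem_inter.2 ⟨(G.mem_of_adj a b h.1).2, h.2.2⟩⟩

/-- `φ` is an isomorphism from `G` onto `H`. -/
def IsoVia (G H : NatGraph) (φ : ℕ → ℕ) : Prop :=
  Set.BijOn φ (G.verts : Set ℕ) (H.verts : Set ℕ) ∧
    ∀ a ∈ G.verts, ∀ b ∈ G.verts, (G.Adj a b ↔ H.Adj (φ a) (φ b))

/-- `G` and `H` are isomorphic. -/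
def Iso (G H : NatGraph) : Prop := ∃ φ, G.IsoVia H φ

/-- `H ≤ G` : `H` is isomorphic to an induced subgraph of `G`. -/
def Le (H G : NatGraph) : Prop := ∃ U ⊆ G.verts, H.Iso (G.induce U)

end NatGraph

/-- `K` is the disjoint union of the family `C` of graphs. -/
def IsDisjUnion {k : ℕ} (K : NatGraph) (C : Fin k → NatGraph) : Prop :=
  (∀ i j, i ≠ j → Disjoint (C i).verts (C j).verts) ∧
  K.verts = Finset.univ.biUnion (fun j => (C j).verts) ∧
  ∀ a b, K.Adj a b ↔ ∃ j, (C j).Adj a b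

/-- `kG₀` : the set of graphs that are disjoint unions of `k` copies of `G₀`. -/
def kCopies (k : ℕ) (G₀ : NatGraph) : Set NatGraph :=
  {K | ∃ C : Fin k → NatGraph, (∀ j, (C j).Iso G₀) ∧ IsDisjUnion K C}

/-- The *-join `G₁ * ⋯ * Gₙ` of a family of graphs (with pairwise disjoint
vertex sets): all graphs on the union of the vertex sets inducing each `Gᵢ`,
so that only edges joining distinct `Gᵢ`'s may be added. -/
def StarJoin {n : ℕ} (Gs : Fin n → NatGraph) : Set NatGraph :=
  {H | H.verts = Finset.univ.biUnion (fun i => (Gs i).verts) ∧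
    ∀ i, ∀ a ∈ (Gs i).verts, ∀ b ∈ (Gs i).verts, (H.Adj a b ↔ (Gs i).Adj a b)}

/-- `G * K₁` : the graphs obtained from `G` by adding one new vertex joined
arbitrarily to `G`. -/
def joinOne (G : NatGraph) : Set NatGraph :=
  {H | ∃ v, v ∉ G.verts ∧ H.verts = insert v G.verts ∧
    ∀ a ∈ G.verts, ∀ b ∈ G.verts, (H.Adj a b ↔ G.Adj a b)}

/-- A graph property: a nonempty isomorphism-closed class of graphs (it
contains the null graph, which by convention belongs to every property, and
some graph with at least one vertex). -/
def IsProperty (P : Set NatGraph) : Prop :=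
  nullGraph ∈ P ∧ (∃ G ∈ P, G.verts.Nonempty) ∧
    ∀ G H, NatGraph.Iso G H → G ∈ P → H ∈ P

/-- `P` is induced-hereditary. -/
def IndHer (P : Set NatGraph) : Prop := ∀ G H, G ∈ P → NatGraph.Le H G → H ∈ P

/-- `P` is additive: closed under disjoint unions. -/
def Additive' (P : Set NatGraph) : Prop :=
  ∀ G H K : NatGraph, G ∈ P → H ∈ P → IsDisjUnion K ![G, H] → K ∈ P

/-- An additive induced-hereditary graph property. -/
def IsAIH (P : Set NatGraph) : Prop := IsProperty P ∧ IndHer P ∧ Additive' P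

/-- A `(P₁,…,Pₙ)`-partition of `G` (parts may be empty). -/
def IsPartitionInto {n : ℕ} (Ps : Fin n → Set NatGraph) (G : NatGraph)
    (V : Fin n → Finset ℕ) : Prop :=
  (∀ i j, i ≠ j → Disjoint (V i) (V j)) ∧
  Finset.univ.biUnion V = G.verts ∧
  ∀ i, G.induce (V i) ∈ Ps i

/-- The product `P₁ ∘ ⋯ ∘ Pₙ` of properties. -/
def ProdProp {n : ℕ} (Ps : Fin n → Set NatGraph) : Set NatGraph :=
  {G | ∃ V : Fin n → Finset ℕ, IsPartitionInto Ps G V}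

/-- A `P`-decomposition of `G` with parts `V` : the parts are nonempty and
partition `V(G)`, and for every `k ≥ 1` every graph in
`kG[V₁] * ⋯ * kG[Vₙ]` belongs to `P`. -/
def IsDecomp (P : Set NatGraph) (G : NatGraph) {n : ℕ} (V : Fin n → Finset ℕ) : Prop :=
  (∀ i, (V i).Nonempty) ∧
  (∀ i j, i ≠ j → Disjoint (V i) (V j)) ∧
  Finset.univ.biUnion V = G.verts ∧
  ∀ k : ℕ, 0 < k → ∀ A : Fin n → NatGraph,
    (∀ i, A i ∈ kCopies k (G.induce (V i))) →
    (∀ i j, i ≠ j → Disjoint (A i).verts (A j).verts) →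
    ∀ H ∈ StarJoin A, H ∈ P

/-- `dec_P(G)` : the maximum number of parts of a `P`-decomposition of `G`
(`0` if there is none). -/
noncomputable def decP (P : Set NatGraph) (G : NatGraph) : ℕ :=
  sSup {n | ∃ V : Fin n → Finset ℕ, IsDecomp P G V}

/-- `G` is `P`-strict : `G ∈ P` but some graph in `G * K₁` is not in `P`. -/
def Strict (P : Set NatGraph) (G : NatGraph) : Prop :=
  G ∈ P ∧ ∃ H ∈ joinOne G, H ∉ P

/-- `dec(P) = min { dec_P(G) : G ∈ S(P) }`. -/
noncomputable def decOf (P : Set NatGraph) : ℕ :=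
  sInf (decP P '' {G | Strict P G})

/-- `dec_P(𝒢) = min { dec_P(G) : G ∈ 𝒢 }`. -/
noncomputable def decSet (P 𝒢 : Set NatGraph) : ℕ := sInf (decP P '' 𝒢)

/-- `⟨𝒢⟩` : the induced-hereditary property generated by `𝒢`. -/
def gen (𝒢 : Set NatGraph) : Set NatGraph := {G | ∃ H ∈ 𝒢, NatGraph.Le G H}

/-- `𝒢` is a generating set for `P`. -/
def Generates (𝒢 P : Set NatGraph) : Prop := gen 𝒢 = P

/-- `G` is uniquely `P`-decomposable: it has exactly one `P`-decomposition
(as an unordered partition) with `dec_P(G)` parts. -/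
def UniquelyDecomposable (P : Set NatGraph) (G : NatGraph) : Prop :=
  (∃ V : Fin (decP P G) → Finset ℕ, IsDecomp P G V) ∧
  ∀ V W : Fin (decP P G) → Finset ℕ, IsDecomp P G V → IsDecomp P G W →
    ∃ σ : Equiv.Perm (Fin (decP P G)), ∀ i, W i = V (σ i)

/-- Data exhibiting `Gstar` as a member of `s ⊛ G` : `s` pairwise disjoint
copies of `G` (given by isomorphisms) whose *-join contains `Gstar`. -/
structure CopyJoin (G : NatGraph) (s : ℕ) (Gstar : NatGraph) where
  copies : Fin s → NatGraph
  maps : Fin s → ℕ → ℕ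
  iso : ∀ k, G.IsoVia (copies k) (maps k)
  disj : ∀ k l, k ≠ l → Disjoint (copies k).verts (copies l).verts
  mem : Gstar ∈ StarJoin copies

/-- `Gstar ∈ s ⊛ G` respects `d₀ = (U₁,…,Uₘ)` : every added edge between two
different copies of `G` meets (copies of) two different `Uⱼ`'s, i.e. there is
no edge between the copies of the same `Uⱼ` in two different copies of `G`. -/
def CopyJoin.RespectsJoin {G : NatGraph} {s : ℕ} {Gstar : NatGraph}
    (cj : CopyJoin G s Gstar) {m : ℕ} (U : Fin m → Finset ℕ) : Prop :=
  ∀ k l : Fin s, k ≠ l → ∀ j : Fin m, ∀ a ∈ (U j).image (cj.maps k),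
    ∀ b ∈ (U j).image (cj.maps l), ¬Gstar.Adj a b

/-- A partition `V` of `Gstar ∈ s ⊛ G` respects `d₀ = (U₁,…,Uₘ)` uniformly:
for each part `Vᵢ` there is a single `Uⱼ` such that in every copy `Gᵏ`,
`Vᵢ ∩ V(Gᵏ)` is contained in the copy of `Uⱼ`. -/
def CopyJoin.RespectsUniformly {G : NatGraph} {s : ℕ} {Gstar : NatGraph}
    (cj : CopyJoin G s Gstar) {n m : ℕ}
    (V : Fin n → Finset ℕ) (U : Fin m → Finset ℕ) : Prop :=
  ∀ i, ∃ j, ∀ k, V i ∩ (cj.copies k).verts ⊆ (U j).image (cj.maps k)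

/-- An irreducible additive induced-hereditary property: one that is not the
product of two additive induced-hereditary properties. -/
def IrredProp (P : Set NatGraph) : Prop :=
  IsAIH P ∧ ¬∃ Q R : Set NatGraph, IsAIH Q ∧ IsAIH R ∧ P = ProdProp ![Q, R]

/-!
Given `G ∈ P`, pick a `P`-strict `F` with `dec_P(F) = dec(P)` and a copy of it disjoint from `G`.
By additivity `G ⊔ F ∈ P = ⟨𝒢⟩`, so `G ⊔ F ≤ H` for some `H ∈ 𝒢`. Strictness passes from `F` up
to `H ∈ P`, and a `P`-decomposition of `H` pulls back along `F ≤ H` to one of `F` with as many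
parts (strictness of `F` keeps the parts nonempty), so `dec(P) ≤ dec_P(H) ≤ dec_P(F) = dec(P)`,
and `G ≤ H` with `H ∈ 𝒢↓`.
-/

open Finset

namespace NatGraph

lemma adj_comm (G : NatGraph) (a b : ℕ) : G.Adj a b ↔ G.Adj b a :=
  ⟨G.symm a b, G.symm b a⟩

lemma induce_verts_of_subset {G : NatGraph} {U : Finset ℕ} (h : U ⊆ G.verts) :
    (G.induce U).verts = U :=
  inter_eq_right.2 h

structure IsEmbedding (F G : NatGraph) (g : ℕ → ℕ) : Prop where
  mapsTo : Set.MapsTo g F.verts G.verts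
  injOn : Set.InjOn g F.verts
  adj_iff : ∀ a ∈ F.verts, ∀ b ∈ F.verts, (G.Adj (g a) (g b) ↔ F.Adj a b)

lemma isEmbedding_id (F : NatGraph) : F.IsEmbedding F id :=
  ⟨Set.mapsTo_id _, Set.injOn_id _, fun _ _ _ _ => Iff.rfl⟩

lemma IsEmbedding.comp {F G K : NatGraph} {f g : ℕ → ℕ} (hg : G.IsEmbedding K g)
    (hf : F.IsEmbedding G f) : F.IsEmbedding K (g ∘ f) where
  mapsTo := hg.mapsTo.comp hf.mapsTo
  injOn := hg.injOn.comp hf.injOn hf.mapsTo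
  adj_iff a ha b hb :=
    (hg.adj_iff _ (hf.mapsTo ha) _ (hf.mapsTo hb)).trans (hf.adj_iff a ha b hb)

lemma IsEmbedding.induce {F G : NatGraph} {g : ℕ → ℕ} (h : F.IsEmbedding G g)
    {U V : Finset ℕ} (hUV : ∀ a ∈ F.verts ∩ U, g a ∈ V) :
    (F.induce U).IsEmbedding (G.induce V) g where
  mapsTo a ha := mem_inter.2 ⟨h.mapsTo (mem_inter.1 ha).1, hUV a ha⟩
  injOn := h.injOn.mono fun a ha => (mem_inter.1 ha).1
  adj_iff a ha b hb := by
    change (G.Adj _ _ ∧ _ ∧ _) ↔ (F.Adj a b ∧ a ∈ U ∧ b ∈ U)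
    simp [h.adj_iff a (mem_inter.1 ha).1 b (mem_inter.1 hb).1, hUV a ha, hUV b hb,
      (mem_inter.1 ha).2, (mem_inter.1 hb).2]

lemma IsoVia.isEmbedding {G H : NatGraph} {φ : ℕ → ℕ} (h : G.IsoVia H φ) :
    G.IsEmbedding H φ :=
  ⟨h.1.mapsTo, h.1.injOn, fun a ha b hb => (h.2 a ha b hb).symm⟩

lemma Iso.refl (G : NatGraph) : G.Iso G :=
  ⟨id, Set.bijOn_id _, fun _ _ _ _ => Iff.rfl⟩

lemma Iso.symm {G H : NatGraph} (h : G.Iso H) : H.Iso G := by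
  obtain ⟨φ, hbij, hadj⟩ := h
  have hinv := hbij.invOn_invFunOn
  have hbij' := hbij.symm hinv.symm
  refine ⟨Function.invFunOn φ G.verts, hbij', fun a ha b hb => ?_⟩
  rw [hadj _ (hbij'.mapsTo ha) _ (hbij'.mapsTo hb), hinv.2 ha, hinv.2 hb]

lemma le_iff_exists_isEmbedding {F G : NatGraph} : F.Le G ↔ ∃ g, F.IsEmbedding G g := by
  constructor
  · rintro ⟨U, hU, φ, hbij, hadj⟩
    have hφU : ∀ a ∈ F.verts, φ a ∈ U := fun a ha => by
      simpa [induce_verts_of_subset hU] using hbij.mapsTo ha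
    refine ⟨φ, fun a ha => hU (hφU a ha), hbij.injOn, fun a ha b hb => ?_⟩
    simp [hadj a ha b hb, induce, hφU a ha, hφU b hb]
  · rintro ⟨g, hmaps, hinj, hadj⟩
    have himage : F.verts.image g ⊆ G.verts := image_subset_iff.2 fun a ha => hmaps ha
    refine ⟨F.verts.image g, himage, g, ?_, fun a ha b hb => ?_⟩
    · rw [induce_verts_of_subset himage, coe_image]
      exact hinj.bijOn_image
    · change F.Adj a b ↔ G.Adj (g a) (g b) ∧ _ ∧ _
      simp [hadj a ha b hb, mem_image_of_mem g ha, mem_image_of_mem g hb]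

lemma IsEmbedding.le {F G : NatGraph} {g : ℕ → ℕ} (h : F.IsEmbedding G g) : F.Le G :=
  le_iff_exists_isEmbedding.2 ⟨g, h⟩

lemma Le.refl (G : NatGraph) : G.Le G :=
  (isEmbedding_id G).le

lemma Le.trans {F G K : NatGraph} (h₁ : F.Le G) (h₂ : G.Le K) : F.Le K := by
  obtain ⟨f, hf⟩ := le_iff_exists_isEmbedding.1 h₁
  obtain ⟨g, hg⟩ := le_iff_exists_isEmbedding.1 h₂
  exact (hg.comp hf).le

lemma Iso.le {G H : NatGraph} (h : G.Iso H) : G.Le H :=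
  let ⟨_, hφ⟩ := h
  hφ.isEmbedding.le

def map (G : NatGraph) (f : ℕ → ℕ) (hf : Function.Injective f) : NatGraph where
  verts := G.verts.image f
  Adj X Y := ∃ a b, G.Adj a b ∧ f a = X ∧ f b = Y
  symm := by
    rintro _ _ ⟨a, b, h, rfl, rfl⟩
    exact ⟨b, a, G.symm a b h, rfl, rfl⟩
  loopless := by
    rintro _ ⟨a, b, h, rfl, hba⟩
    rw [hf hba] at h
    exact G.loopless a h
  mem_of_adj := by
    rintro _ _ ⟨a, b, h, rfl, rfl⟩
    exact ⟨mem_image_of_mem f (G.mem_of_adj a b h).1, mem_image_of_mem f (G.mem_of_adj a b h).2⟩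

lemma isoVia_map (G : NatGraph) {f : ℕ → ℕ} (hf : Function.Injective f) :
    G.IsoVia (G.map f hf) f := by
  refine ⟨?_, fun a _ b _ => ⟨fun h => ⟨a, b, h, rfl, rfl⟩, ?_⟩⟩
  · rw [map, coe_image]
    exact hf.injOn.bijOn_image
  · rintro ⟨a', b', h, ha, hb⟩
    rwa [← hf ha, ← hf hb]

def iUnion {k : ℕ} (C : Fin k → NatGraph) : NatGraph where
  verts := univ.biUnion fun j => (C j).verts
  Adj a b := ∃ j, (C j).Adj a b
  symm a b := fun ⟨j, h⟩ => ⟨j, (C j).symm a b h⟩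
  loopless a := fun ⟨j, h⟩ => (C j).loopless a h
  mem_of_adj a b := fun ⟨j, h⟩ =>
    ⟨mem_biUnion.2 ⟨j, mem_univ j, ((C j).mem_of_adj a b h).1⟩,
      mem_biUnion.2 ⟨j, mem_univ j, ((C j).mem_of_adj a b h).2⟩⟩

lemma mem_iUnion_verts {k : ℕ} {C : Fin k → NatGraph} {x : ℕ} :
    x ∈ (iUnion C).verts ↔ ∃ j, x ∈ (C j).verts := by
  simp [iUnion]

end NatGraph

open NatGraph

def PairwiseDisjointVerts {k : ℕ} (C : Fin k → NatGraph) : Prop :=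
  ∀ i j, i ≠ j → Disjoint (C i).verts (C j).verts

lemma PairwiseDisjointVerts.eq_of_mem {k : ℕ} {C : Fin k → NatGraph}
    (hC : PairwiseDisjointVerts C) {x : ℕ} {i j : Fin k} (hi : x ∈ (C i).verts)
    (hj : x ∈ (C j).verts) : i = j :=
  by_contra fun h => disjoint_left.1 (hC i j h) hi hj

lemma pairwiseDisjointVerts_pair {G F : NatGraph} (h : Disjoint G.verts F.verts) :
    PairwiseDisjointVerts ![G, F] := by
  intro i j hij
  fin_cases i <;> fin_cases j <;> simp_all [h.symm]

lemma isDisjUnion_iUnion {k : ℕ} {C : Fin k → NatGraph} (hC : PairwiseDisjointVerts C) :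
    IsDisjUnion (iUnion C) C :=
  ⟨hC, rfl, fun _ _ => Iff.rfl⟩

namespace IsDisjUnion

variable {k : ℕ} {K : NatGraph} {C : Fin k → NatGraph}

lemma pairwiseDisjointVerts (hK : IsDisjUnion K C) : PairwiseDisjointVerts C :=
  hK.1

lemma verts_eq (hK : IsDisjUnion K C) : K.verts = (iUnion C).verts :=
  hK.2.1

lemma adj_iff (hK : IsDisjUnion K C) {a b : ℕ} {i j : Fin k} (ha : a ∈ (C i).verts)
    (hb : b ∈ (C j).verts) : K.Adj a b ↔ i = j ∧ (C i).Adj a b := by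
  rw [hK.2.2]
  constructor
  · rintro ⟨l, h⟩
    obtain rfl := hK.pairwiseDisjointVerts.eq_of_mem ha ((C l).mem_of_adj a b h).1
    obtain rfl := hK.pairwiseDisjointVerts.eq_of_mem hb ((C i).mem_of_adj a b h).2
    exact ⟨rfl, h⟩
  · rintro ⟨-, h⟩
    exact ⟨i, h⟩

lemma isEmbedding (hK : IsDisjUnion K C) (j : Fin k) : (C j).IsEmbedding K id where
  mapsTo _ hx := hK.verts_eq ▸ mem_iUnion_verts.2 ⟨j, hx⟩
  injOn := Set.injOn_id _
  adj_iff _ ha _ hb := (hK.adj_iff ha hb).trans ⟨And.right, fun h => ⟨rfl, h⟩⟩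

end IsDisjUnion

section Glue

variable {k : ℕ} {A B : Fin k → NatGraph} {f : Fin k → ℕ → ℕ}

open Classical in
noncomputable def glue (A : Fin k → NatGraph) (f : Fin k → ℕ → ℕ) (x : ℕ) : ℕ :=
  if h : ∃ j, x ∈ (A j).verts then f h.choose x else x

lemma glue_eq (hA : PairwiseDisjointVerts A) {x : ℕ} {j : Fin k} (hx : x ∈ (A j).verts) :
    glue A f x = f j x := by
  have h : ∃ j, x ∈ (A j).verts := ⟨j, hx⟩
  rw [glue, dif_pos h, hA.eq_of_mem h.choose_spec hx]

lemma exists_glue_eq (hA : PairwiseDisjointVerts A) {x : ℕ} (hx : x ∈ (iUnion A).verts) :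
    ∃ j, x ∈ (A j).verts ∧ glue A f x = f j x :=
  let ⟨j, hj⟩ := mem_iUnion_verts.1 hx
  ⟨j, hj, glue_eq hA hj⟩

lemma mapsTo_glue (hA : PairwiseDisjointVerts A) (hf : ∀ j, (A j).IsEmbedding (B j) (f j)) :
    Set.MapsTo (glue A f) (iUnion A).verts (iUnion B).verts := by
  intro x hx
  obtain ⟨j, hj, hx⟩ := exists_glue_eq hA hx
  exact hx ▸ mem_iUnion_verts.2 ⟨j, (hf j).mapsTo hj⟩

lemma injOn_glue (hA : PairwiseDisjointVerts A) (hB : PairwiseDisjointVerts B)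
    (hf : ∀ j, (A j).IsEmbedding (B j) (f j)) : Set.InjOn (glue A f) (iUnion A).verts := by
  intro x hx y hy hxy
  obtain ⟨i, hi, hx⟩ := exists_glue_eq hA hx
  obtain ⟨j, hj, hy⟩ := exists_glue_eq hA hy
  rw [hx, hy] at hxy
  obtain rfl := hB.eq_of_mem ((hf i).mapsTo hi) (hxy ▸ (hf j).mapsTo hj)
  exact (hf i).injOn hi hj hxy

lemma IsDisjUnion.isEmbedding_glue {K K' : NatGraph} (hK : IsDisjUnion K A)
    (hK' : IsDisjUnion K' B) (hf : ∀ j, (A j).IsEmbedding (B j) (f j)) :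
    K.IsEmbedding K' (glue A f) := by
  have hA := hK.pairwiseDisjointVerts
  have hB := hK'.pairwiseDisjointVerts
  refine ⟨?_, ?_, fun x hx y hy => ?_⟩
  · rw [hK.verts_eq, hK'.verts_eq]
    exact mapsTo_glue hA hf
  · rw [hK.verts_eq]
    exact injOn_glue hA hB hf
  obtain ⟨i, hi, hx⟩ := exists_glue_eq (f := f) hA (hK.verts_eq ▸ hx)
  obtain ⟨j, hj, hy⟩ := exists_glue_eq (f := f) hA (hK.verts_eq ▸ hy)
  rw [hx, hy, hK'.adj_iff ((hf i).mapsTo hi) ((hf j).mapsTo hj), hK.adj_iff hi hj]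
  constructor <;> rintro ⟨rfl, h⟩
  · exact ⟨rfl, ((hf i).adj_iff x hi y hj).1 h⟩
  · exact ⟨rfl, ((hf i).adj_iff x hi y hj).2 h⟩

def overlay (B : Fin k → NatGraph) (Z : NatGraph) (g : ℕ → ℕ) (hg : Set.InjOn g Z.verts)
    (hmaps : Set.MapsTo g Z.verts (iUnion B).verts) : NatGraph where
  verts := (iUnion B).verts
  Adj X Y := (iUnion B).Adj X Y ∨ ∃ x y, Z.Adj x y ∧ g x = X ∧ g y = Y
  symm X Y := by
    rintro (h | ⟨x, y, h, rfl, rfl⟩)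
    · exact Or.inl ((iUnion B).symm X Y h)
    · exact Or.inr ⟨y, x, Z.symm x y h, rfl, rfl⟩
  loopless X := by
    rintro (h | ⟨x, y, h, rfl, hyx⟩)
    · exact (iUnion B).loopless X h
    · rw [hg (Z.mem_of_adj x y h).2 (Z.mem_of_adj x y h).1 hyx] at h
      exact Z.loopless x h
  mem_of_adj X Y := by
    rintro (h | ⟨x, y, h, rfl, rfl⟩)
    · exact (iUnion B).mem_of_adj X Y h
    · exact ⟨hmaps (Z.mem_of_adj x y h).1, hmaps (Z.mem_of_adj x y h).2⟩

lemma exists_mem_starJoin_isEmbedding (hB : PairwiseDisjointVerts B) {Z : NatGraph}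
    {g : ℕ → ℕ} (hg : Set.InjOn g Z.verts) (hmaps : Set.MapsTo g Z.verts (iUnion B).verts)
    (hcompat : ∀ x ∈ Z.verts, ∀ y ∈ Z.verts, ∀ i, g x ∈ (B i).verts → g y ∈ (B i).verts →
      ((B i).Adj (g x) (g y) ↔ Z.Adj x y)) :
    ∃ K ∈ StarJoin B, Z.IsEmbedding K g := by
  refine ⟨overlay B Z g hg hmaps, ⟨rfl, fun i a ha b hb => ?_⟩, hmaps, hg, fun x hx y hy => ?_⟩
  · refine ⟨?_, fun h => Or.inl ⟨i, h⟩⟩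
    rintro (h | ⟨x, y, h, rfl, rfl⟩)
    · exact (((isDisjUnion_iUnion hB).adj_iff ha hb).1 h).2
    · exact (hcompat x (Z.mem_of_adj x y h).1 y (Z.mem_of_adj x y h).2 i ha hb).2 h
  · refine ⟨?_, fun h => Or.inr ⟨x, y, h, rfl, rfl⟩⟩
    rintro (⟨i, h⟩ | ⟨x', y', h, hx', hy'⟩)
    · exact (hcompat x hx y hy i ((B i).mem_of_adj _ _ h).1 ((B i).mem_of_adj _ _ h).2).1 h
    · rwa [← hg (Z.mem_of_adj _ _ h).1 hx hx', ← hg (Z.mem_of_adj _ _ h).2 hy hy']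

lemma exists_mem_starJoin_isEmbedding_glue (hA : PairwiseDisjointVerts A)
    (hB : PairwiseDisjointVerts B) (hf : ∀ j, (A j).IsEmbedding (B j) (f j)) {Z : NatGraph}
    (hZ : Z ∈ StarJoin A) : ∃ K ∈ StarJoin B, Z.IsEmbedding K (glue A f) := by
  have hZA : Z.verts = (iUnion A).verts := hZ.1
  refine exists_mem_starJoin_isEmbedding hB (hZA ▸ injOn_glue hA hB hf)
    (hZA ▸ mapsTo_glue hA hf) fun x hx y hy i hxi hyi => ?_
  obtain ⟨i', hi', hx⟩ := exists_glue_eq (f := f) hA (hZA ▸ hx)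
  obtain ⟨j', hj', hy⟩ := exists_glue_eq (f := f) hA (hZA ▸ hy)
  rw [hx] at hxi ⊢
  rw [hy] at hyi ⊢
  obtain rfl := hB.eq_of_mem ((hf i').mapsTo hi') hxi
  obtain rfl := hB.eq_of_mem ((hf j').mapsTo hj') hyi
  exact ((hf _).adj_iff x hi' y hj').trans (hZ.2 _ x hi' y hj').symm

end Glue

lemma Nat.pair_right_injective (t : ℕ) : Function.Injective (Nat.pair t) :=
  fun _ _ h => (Nat.pair_eq_pair.1 h).2

namespace NatGraph

def copy (G : NatGraph) (t : ℕ) : NatGraph :=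
  G.map (Nat.pair t) (Nat.pair_right_injective t)

def copies (G : NatGraph) (k : ℕ) : NatGraph :=
  iUnion fun t : Fin k => G.copy t

lemma disjoint_copy_verts {G G' : NatGraph} {t t' : ℕ}
    (h : t ≠ t' ∨ Disjoint G.verts G'.verts) : Disjoint (G.copy t).verts (G'.copy t').verts := by
  simp only [copy, map, disjoint_left, mem_image]
  rintro _ ⟨a, ha, rfl⟩ ⟨b, hb, hab⟩
  obtain ⟨rfl, rfl⟩ := Nat.pair_eq_pair.1 hab
  rcases h with h | h
  · exact h rfl
  · exact disjoint_left.1 h ha hb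

lemma isDisjUnion_copies (G : NatGraph) (k : ℕ) :
    IsDisjUnion (G.copies k) fun t : Fin k => G.copy t :=
  isDisjUnion_iUnion fun _ _ h => disjoint_copy_verts (Or.inl (Fin.val_injective.ne h))

lemma copies_mem_kCopies (G : NatGraph) (k : ℕ) : G.copies k ∈ kCopies k G :=
  ⟨_, fun t => Iso.symm ⟨_, G.isoVia_map (Nat.pair_right_injective t)⟩, G.isDisjUnion_copies k⟩

lemma disjoint_copies_verts {G G' : NatGraph} (h : Disjoint G.verts G'.verts) (k : ℕ) :
    Disjoint (G.copies k).verts (G'.copies k).verts := by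
  simp only [copies, iUnion, disjoint_biUnion_left, disjoint_biUnion_right]
  exact fun _ _ _ _ => disjoint_copy_verts (Or.inr h)

lemma self_mem_kCopies_one (G : NatGraph) : G ∈ kCopies 1 G :=
  ⟨fun _ => G, fun _ => Iso.refl G, fun i j h => absurd (Subsingleton.elim i j) h,
    by simp, fun _ _ => by simp⟩

def addVertex (H : NatGraph) (w : ℕ) (S : Finset ℕ) (hw : w ∉ H.verts)
    (hS : S ⊆ H.verts) : NatGraph where
  verts := insert w H.verts
  Adj X Y := H.Adj X Y ∨ (X = w ∧ Y ∈ S) ∨ (Y = w ∧ X ∈ S)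
  symm X Y := by
    rintro (h | h | h)
    · exact Or.inl (H.symm X Y h)
    · exact Or.inr (Or.inr h)
    · exact Or.inr (Or.inl h)
  loopless X := by
    rintro (h | ⟨rfl, h⟩ | ⟨rfl, h⟩)
    · exact H.loopless X h
    · exact hw (hS h)
    · exact hw (hS h)
  mem_of_adj X Y := by
    rintro (h | ⟨rfl, h⟩ | ⟨rfl, h⟩)
    · exact ⟨mem_insert_of_mem (H.mem_of_adj X Y h).1, mem_insert_of_mem (H.mem_of_adj X Y h).2⟩
    · exact ⟨mem_insert_self _ _, mem_insert_of_mem (hS h)⟩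
    · exact ⟨mem_insert_of_mem (hS h), mem_insert_self _ _⟩

variable {H : NatGraph} {w : ℕ} {S : Finset ℕ} (hw : w ∉ H.verts) (hS : S ⊆ H.verts)

lemma addVertex_mem_joinOne : H.addVertex w S hw hS ∈ joinOne H := by
  refine ⟨w, hw, rfl, fun a ha b hb => ?_⟩
  simp [addVertex, ne_of_mem_of_not_mem ha hw, ne_of_mem_of_not_mem hb hw]

lemma addVertex_adj_new {b : ℕ} (hb : b ∈ H.verts) : (H.addVertex w S hw hS).Adj w b ↔ b ∈ S := by
  have hHw : ¬H.Adj w b := fun h => hw (H.mem_of_adj w b h).1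
  simp [addVertex, ne_of_mem_of_not_mem hb hw, hHw]

end NatGraph

lemma NatGraph.IsEmbedding.update {F H F' H' : NatGraph} {φ : ℕ → ℕ} {v w : ℕ}
    (hφ : F.IsEmbedding H φ) (hv : v ∉ F.verts) (hF' : F'.verts = insert v F.verts)
    (hF'adj : ∀ a ∈ F.verts, ∀ b ∈ F.verts, (F'.Adj a b ↔ F.Adj a b))
    (hw : w ∉ H.verts) (hH' : H'.verts = insert w H.verts)
    (hH'adj : ∀ a ∈ H.verts, ∀ b ∈ H.verts, (H'.Adj a b ↔ H.Adj a b))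
    (hvw : ∀ b ∈ F.verts, (H'.Adj w (φ b) ↔ F'.Adj v b)) :
    F'.IsEmbedding H' (Function.update φ v w) := by
  have hg : ∀ a ∈ F.verts, Function.update φ v w a = φ a :=
    fun a ha => Function.update_of_ne (ne_of_mem_of_not_mem ha hv) _ _
  have hφw : ∀ a ∈ F.verts, φ a ≠ w := fun a ha => ne_of_mem_of_not_mem (hφ.mapsTo ha) hw
  refine ⟨fun x hx => ?_, fun x hx y hy hxy => ?_, fun x hx y hy => ?_⟩
  · rw [hH']
    rcases mem_insert.1 (hF' ▸ hx) with rfl | hx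
    · simp
    · exact hg x hx ▸ mem_insert_of_mem (hφ.mapsTo hx)
  · rcases mem_insert.1 (hF' ▸ hx) with rfl | hx <;> rcases mem_insert.1 (hF' ▸ hy) with rfl | hy
    · rfl
    · simp only [Function.update_self, hg y hy] at hxy
      exact absurd hxy.symm (hφw y hy)
    · simp only [Function.update_self, hg x hx] at hxy
      exact absurd hxy (hφw x hx)
    · rw [hg x hx, hg y hy] at hxy
      exact hφ.injOn hx hy hxy
  · rcases mem_insert.1 (hF' ▸ hx) with rfl | hx <;> rcases mem_insert.1 (hF' ▸ hy) with rfl | hy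
    · simp only [Function.update_self]
      exact iff_of_false (H'.loopless w) (F'.loopless _)
    · rw [Function.update_self, hg y hy, hvw y hy]
    · rw [Function.update_self, hg x hx, adj_comm, hvw x hx, adj_comm]
    · rw [hg x hx, hg y hy, hH'adj _ (hφ.mapsTo hx) _ (hφ.mapsTo hy), hF'adj x hx y hy,
        hφ.adj_iff x hx y hy]

section Strict

variable {P : Set NatGraph}

lemma IndHer.mem_of_isEmbedding (hher : IndHer P) {F G : NatGraph} {g : ℕ → ℕ} (hG : G ∈ P)
    (h : F.IsEmbedding G g) : F ∈ P :=
  hher G F hG h.le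

/-- A new vertex of `H` joined to the images of the neighbours of the bad vertex of `F`
recreates the bad extension of `F` inside an extension of `H`. -/
lemma Strict.of_le (hher : IndHer P) {F H : NatGraph} (hF : Strict P F) (hFH : F.Le H)
    (hH : H ∈ P) : Strict P H := by
  classical
  obtain ⟨-, F', ⟨v, hv, hF', hF'adj⟩, hF'P⟩ := hF
  obtain ⟨φ, hφ⟩ := le_iff_exists_isEmbedding.1 hFH
  obtain ⟨w, hw⟩ := Infinite.exists_notMem_finset H.verts
  set S := (F.verts.filter (F'.Adj v)).image φ
  have hS : S ⊆ H.verts := image_subset_iff.2 fun a ha => hφ.mapsTo (mem_filter.1 ha).1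
  obtain ⟨-, -, -, hH'adj⟩ := addVertex_mem_joinOne hw hS
  refine ⟨hH, H.addVertex w S hw hS, addVertex_mem_joinOne hw hS, fun hmem => hF'P ?_⟩
  refine hher.mem_of_isEmbedding hmem (hφ.update hv hF' hF'adj hw rfl hH'adj fun b hb => ?_)
  rw [addVertex_adj_new hw hS (hφ.mapsTo hb)]
  constructor
  · intro h
    obtain ⟨a, ha, hab⟩ := mem_image.1 h
    exact hφ.injOn (mem_filter.1 ha).1 hb hab ▸ (mem_filter.1 ha).2
  · exact fun h => mem_image_of_mem φ (mem_filter.2 ⟨hb, h⟩)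

lemma iso_nullGraph {G : NatGraph} (h : G.verts = ∅) : nullGraph.Iso G :=
  ⟨id, by simp [nullGraph, h], fun a ha => absurd ha (notMem_empty a)⟩

/-- A smallest graph outside `P` minus one vertex is `P`-strict. -/
lemma exists_strict (hprop : IsProperty P) (hne : P ≠ Set.univ) : ∃ F, Strict P F := by
  obtain ⟨X, hX⟩ : ∃ X, X ∉ P := by
    by_contra! h
    exact hne (Set.eq_univ_of_forall h)
  obtain ⟨Y, hYP, hYmin⟩ :=
    (InvImage.wf (fun G : NatGraph => G.verts.card) wellFounded_lt).has_min {X | X ∉ P} ⟨X, hX⟩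
  obtain ⟨v, hv⟩ : Y.verts.Nonempty :=
    nonempty_iff_ne_empty.2 fun h => hYP (hprop.2.2 _ _ (iso_nullGraph h) hprop.1)
  have hF : (Y.induce (Y.verts.erase v)).verts = Y.verts.erase v :=
    induce_verts_of_subset (erase_subset v Y.verts)
  refine ⟨Y.induce (Y.verts.erase v), ?_, Y, ⟨v, ?_, ?_, fun a ha b hb => ?_⟩, hYP⟩
  · by_contra h
    have hcard : (Y.induce (Y.verts.erase v)).verts.card < Y.verts.card := by
      rw [hF]
      exact card_erase_lt_of_mem hv
    exact hYmin _ h hcard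
  · simp [hF]
  · rw [hF, insert_erase hv]
  · rw [hF] at ha hb
    exact ⟨fun h => ⟨h, ha, hb⟩, And.left⟩

end Strict

namespace IsDecomp

variable {P : Set NatGraph} {F H : NatGraph} {φ : ℕ → ℕ} {n : ℕ} {V : Fin n → Finset ℕ}

lemma subset_verts (hdec : IsDecomp P H V) (i : Fin n) : V i ⊆ H.verts :=
  hdec.2.2.1 ▸ subset_biUnion_of_mem V (mem_univ i)

lemma exists_mem (hdec : IsDecomp P H V) {u : ℕ} (hu : u ∈ H.verts) : ∃ i, u ∈ V i := by
  rw [← hdec.2.2.1] at hu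
  simpa using hu

lemma eq_of_mem (hdec : IsDecomp P H V) {u : ℕ} {i j : Fin n} (hi : u ∈ V i) (hj : u ∈ V j) :
    i = j :=
  by_contra fun h => disjoint_left.1 (hdec.2.1 i j h) hi hj

lemma pairwiseDisjointVerts_induce (hdec : IsDecomp P H V) :
    PairwiseDisjointVerts fun i => H.induce (V i) := fun i j h =>
  disjoint_of_subset_left inter_subset_right
    (disjoint_of_subset_right inter_subset_right (hdec.2.1 i j h))

lemma card_le (hdec : IsDecomp P H V) : n ≤ H.verts.card := by
  simpa [hdec.2.2.1] using card_le_card_biUnion (s := univ) (f := V)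
    (fun i _ j _ h => hdec.2.1 i j h) fun i _ => hdec.1 i

/-- `Z` embeds in a member of `H[V₁] * ⋯ * H[Vₙ]` (edges between parts are free), the case
`k = 1` of the definition of a decomposition. -/
lemma mem_of_compat (hher : IndHer P) (hdec : IsDecomp P H V) {Z : NatGraph} {g : ℕ → ℕ}
    (hinj : Set.InjOn g Z.verts) (hmaps : Set.MapsTo g Z.verts H.verts)
    (hcompat : ∀ x ∈ Z.verts, ∀ y ∈ Z.verts, ∀ i, g x ∈ V i → g y ∈ V i →
      (H.Adj (g x) (g y) ↔ Z.Adj x y)) : Z ∈ P := by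
  have hmaps' : Set.MapsTo g Z.verts (iUnion fun i => H.induce (V i)).verts := fun x hx =>
    let ⟨i, hi⟩ := hdec.exists_mem (hmaps hx)
    mem_iUnion_verts.2 ⟨i, mem_inter.2 ⟨hmaps hx, hi⟩⟩
  obtain ⟨K, hK, hZK⟩ := exists_mem_starJoin_isEmbedding hdec.pairwiseDisjointVerts_induce hinj
    hmaps' fun x hx y hy i hxi hyi => by
      have hxi' := (mem_inter.1 hxi).2
      have hyi' := (mem_inter.1 hyi).2
      change (H.Adj _ _ ∧ _ ∧ _) ↔ _
      simpa [hxi', hyi'] using hcompat x hx y hy i hxi' hyi'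
  exact hher.mem_of_isEmbedding (hdec.2.2.2 1 one_pos _ (fun i => self_mem_kCopies_one _)
    hdec.pairwiseDisjointVerts_induce K hK) hZK

/-- If a part `V i₀` missed the image of `F`, the bad extension `F + v` of `F` would map into
`H` compatibly with the parts by sending `v` into `V i₀`. -/
lemma comap_nonempty (hher : IndHer P) (hdec : IsDecomp P H V) (hF : Strict P F)
    (hφ : F.IsEmbedding H φ) (i₀ : Fin n) : (F.verts.filter fun a => φ a ∈ V i₀).Nonempty := by
  obtain ⟨-, F', ⟨v, hv, hF', hF'adj⟩, hF'P⟩ := hF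
  by_contra hempty
  have hφV : ∀ a ∈ F.verts, φ a ∉ V i₀ := fun a ha h => hempty ⟨a, mem_filter.2 ⟨ha, h⟩⟩
  obtain ⟨u₀, hu₀⟩ := hdec.1 i₀
  set g := Function.update φ v u₀
  have hgv : g v = u₀ := Function.update_self ..
  have hg : ∀ a ∈ F.verts, g a = φ a :=
    fun a ha => Function.update_of_ne (ne_of_mem_of_not_mem ha hv) _ _
  have hF'mem : ∀ x ∈ F'.verts, x ≠ v → x ∈ F.verts :=
    fun x hx hxv => (mem_insert.1 (hF' ▸ hx)).resolve_left hxv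
  have hgV : ∀ x ∈ F'.verts, ∀ i, g x ∈ V i → (x = v ↔ i = i₀) := by
    intro x hx i hi
    by_cases hxv : x = v
    · rw [hxv, hgv] at hi
      exact iff_of_true hxv (hdec.eq_of_mem hi hu₀)
    · rw [hg x (hF'mem x hx hxv)] at hi
      exact iff_of_false hxv fun h => hφV x (hF'mem x hx hxv) (h ▸ hi)
  have hpart : ∀ x ∈ F'.verts, ∀ y ∈ F'.verts, ∀ i, g x ∈ V i → g y ∈ V i →
      x = v ∧ y = v ∨ x ∈ F.verts ∧ y ∈ F.verts := by
    intro x hx y hy i hxi hyi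
    have hxy := (hgV x hx i hxi).trans (hgV y hy i hyi).symm
    by_cases hxv : x = v
    · exact Or.inl ⟨hxv, hxy.1 hxv⟩
    · exact Or.inr ⟨hF'mem x hx hxv, hF'mem y hy (mt hxy.2 hxv)⟩
  have hgH : ∀ x ∈ F'.verts, g x ∈ H.verts := by
    intro x hx
    by_cases hxv : x = v
    · exact hxv ▸ hgv ▸ hdec.subset_verts i₀ hu₀
    · exact hg x (hF'mem x hx hxv) ▸ hφ.mapsTo (hF'mem x hx hxv)
  refine hF'P (hdec.mem_of_compat hher (g := g) (fun x hx y hy hxy => ?_) hgH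
    fun x hx y hy i hxi hyi => ?_)
  · obtain ⟨i, hi⟩ := hdec.exists_mem (hgH x hx)
    rcases hpart x hx y hy i hi (hxy ▸ hi) with ⟨rfl, rfl⟩ | ⟨hx', hy'⟩
    · rfl
    · rw [hg x hx', hg y hy'] at hxy
      exact hφ.injOn hx' hy' hxy
  · rcases hpart x hx y hy i hxi hyi with ⟨rfl, rfl⟩ | ⟨hx', hy'⟩
    · exact iff_of_false (H.loopless _) (F'.loopless _)
    · rw [hg x hx', hg y hy', hF'adj x hx' y hy', hφ.adj_iff x hx' y hy']

/-- Every member of `kF[W₁] * ⋯ * kF[Wₙ]`, where `Wᵢ = φ⁻¹(Vᵢ)`, embeds in a member of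
`kH[V₁] * ⋯ * kH[Vₙ]`, copy by copy and part by part. -/
lemma comap_starJoin_mem (hher : IndHer P) (hdec : IsDecomp P H V) (hφ : F.IsEmbedding H φ)
    {k : ℕ} (hk : 0 < k) {A : Fin n → NatGraph}
    (hA : ∀ i, A i ∈ kCopies k (F.induce (F.verts.filter fun a => φ a ∈ V i)))
    (hdisjA : PairwiseDisjointVerts A) {Z : NatGraph} (hZ : Z ∈ StarJoin A) : Z ∈ P := by
  set B := fun i => (H.induce (V i)).copies k
  have hdisjB : PairwiseDisjointVerts B := fun i j h =>
    disjoint_copies_verts (hdec.pairwiseDisjointVerts_induce i j h) k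
  have hAB : ∀ i, ∃ f, (A i).IsEmbedding (B i) f := by
    intro i
    obtain ⟨C, hCiso, hAC⟩ := hA i
    choose ψ hψ using hCiso
    have hφi : (F.induce (F.verts.filter fun a => φ a ∈ V i)).IsEmbedding (H.induce (V i)) φ :=
      hφ.induce fun a ha => (mem_filter.1 (mem_inter.1 ha).2).2
    exact ⟨_, hAC.isEmbedding_glue (isDisjUnion_copies _ k) fun t =>
      (isoVia_map _ (Nat.pair_right_injective t)).isEmbedding.comp (hφi.comp (hψ t).isEmbedding)⟩
  choose f hf using hAB
  obtain ⟨K, hK, hZK⟩ := exists_mem_starJoin_isEmbedding_glue hdisjA hdisjB hf hZ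
  exact hher.mem_of_isEmbedding
    (hdec.2.2.2 k hk B (fun i => copies_mem_kCopies _ k) hdisjB K hK) hZK

lemma comap (hher : IndHer P) (hdec : IsDecomp P H V) (hF : Strict P F)
    (hφ : F.IsEmbedding H φ) : IsDecomp P F fun i => F.verts.filter fun a => φ a ∈ V i := by
  refine ⟨hdec.comap_nonempty hher hF hφ, fun i j h => ?_, ?_,
    fun k hk A hA hdisjA Z hZ => hdec.comap_starJoin_mem hher hφ hk hA hdisjA hZ⟩
  · exact disjoint_left.2 fun a hai haj =>
      disjoint_left.1 (hdec.2.1 i j h) (mem_filter.1 hai).2 (mem_filter.1 haj).2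
  · ext a
    simp only [mem_biUnion, mem_filter, mem_univ, true_and]
    exact ⟨fun ⟨_, ha, _⟩ => ha,
      fun ha => (hdec.exists_mem (hφ.mapsTo ha)).imp fun _ hi => ⟨ha, hi⟩⟩

end IsDecomp

lemma bddAbove_decomp (P : Set NatGraph) (G : NatGraph) :
    BddAbove {n | ∃ V : Fin n → Finset ℕ, IsDecomp P G V} :=
  ⟨G.verts.card, fun _ ⟨_, hV⟩ => hV.card_le⟩

lemma Strict.decP_le {P : Set NatGraph} (hher : IndHer P) {F H : NatGraph} (hF : Strict P F)
    (hFH : F.Le H) : decP P H ≤ decP P F := by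
  obtain ⟨φ, hφ⟩ := le_iff_exists_isEmbedding.1 hFH
  exact csSup_le_csSup' (bddAbove_decomp P F) fun n ⟨V, hV⟩ => ⟨_, hV.comap hher hF hφ⟩

lemma exists_iso_disjoint (G F : NatGraph) : ∃ F', F.Iso F' ∧ Disjoint G.verts F'.verts := by
  set N := G.verts.sup id + 1
  refine ⟨F.map (· + N) (add_left_injective N), ⟨_, F.isoVia_map _⟩, disjoint_right.2 ?_⟩
  simp only [NatGraph.map, mem_image]
  rintro _ ⟨a, -, rfl⟩ h
  have := le_sup (f := id) h
  simp only [id] at this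
  omega

theorem statement6 (P : Set NatGraph) (hP : IsAIH P) (hne : P ≠ Set.univ)
    (𝒢 : Set NatGraph) (hgen : Generates 𝒢 P) :
    Generates {G ∈ 𝒢 | Strict P G ∧ decP P G = decOf P} P := by
  obtain ⟨hprop, hher, hadd⟩ := hP
  refine Set.Subset.antisymm (fun G ⟨H, hH, hGH⟩ => hgen ▸ ⟨H, hH.1, hGH⟩) fun G hG => ?_
  obtain ⟨F₀, hF₀, hF₀dec⟩ : decOf P ∈ decP P '' {G | Strict P G} :=
    Nat.sInf_mem (let ⟨F, hF⟩ := exists_strict hprop hne; ⟨_, F, hF, rfl⟩)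
  obtain ⟨F, hF₀F, hdisj⟩ := exists_iso_disjoint G F₀
  have hK := isDisjUnion_iUnion (pairwiseDisjointVerts_pair hdisj)
  obtain ⟨H, hH𝒢, hKH⟩ : iUnion ![G, F] ∈ gen 𝒢 :=
    hgen ▸ hadd G F _ hG (hprop.2.2 _ _ hF₀F hF₀.1) hK
  have hHP : H ∈ P := hgen ▸ ⟨H, hH𝒢, Le.refl H⟩
  have hF₀H : F₀.Le H := hF₀F.le.trans ((hK.isEmbedding 1).le.trans hKH)
  have hHstrict : Strict P H := hF₀.of_le hher hF₀H hHP
  refine ⟨H, ⟨hH𝒢, hHstrict, le_antisymm ?_ (Nat.sInf_le ⟨H, hHstrict, rfl⟩)⟩,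
    (hK.isEmbedding 0).le.trans hKH⟩
  exact hF₀dec ▸ hF₀.decP_le hher hF₀H
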